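/- arXiv:2008.06168 — 2 statements merged into one kernel-verified Lean document; each statement's English description precedes it below -/
import Mathlib

section
/- In the stationary setting, suppose moreover that P(a_t a_{t−h} = 1) > 0 for each h = 1,…,m. Then Γ̂_pr(m) converges almost surely to Γ_ε(m) as n → ∞. -/
open MeasureTheory ProbabilityTheory Filter Set

namespace StationaryPr

variable {Ω : Type*} [MeasurableSpace Ω]

/-- The strictly stationary sequence `r_t = f ∘ T^t` generated by a
measure-preserving (ergodic) map `T` and an observable `f`. -/
noncomputable def rproc (T : Ω → Ω) (f : Ω → ℝ) (t : ℕ) (ω : Ω) : ℝ :=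
  f (T^[t] ω)

/-- The zero-return indicator `a_t = 1_{r_t ≠ 0}`. -/
noncomputable def aproc (T : Ω → Ω) (f : Ω → ℝ) (t : ℕ) (ω : Ω) : ℝ :=
  if rproc T f t ω ≠ 0 then 1 else 0

/-- `γ̂_0(h) = n⁻¹ Σ_{t=1+h}^n r_t r_{t-h}`. -/
noncomputable def gammaHat0 (T : Ω → Ω) (f : Ω → ℝ) (n h : ℕ) (ω : Ω) : ℝ :=
  (n : ℝ)⁻¹ * ∑ t ∈ Finset.Icc (h + 1) n, rproc T f t ω * rproc T f (t - h) ω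

/-- `γ̂_a(h) = n⁻¹ Σ_{t=1+h}^n a_t a_{t-h}`. -/
noncomputable def gammaHatA (T : Ω → Ω) (f : Ω → ℝ) (n h : ℕ) (ω : Ω) : ℝ :=
  (n : ℝ)⁻¹ * ∑ t ∈ Finset.Icc (h + 1) n, aproc T f t ω * aproc T f (t - h) ω

/-- `ρ̂_pr(h) = (γ̂_0(h)/γ̂_0(0)) ⋅ (γ̂_a(0)/γ̂_a(h))`. -/
noncomputable def rhoHatPr (T : Ω → Ω) (f : Ω → ℝ) (n h : ℕ) (ω : Ω) : ℝ :=
  (gammaHat0 T f n h ω / gammaHat0 T f n 0 ω) * (gammaHatA T f n 0 ω / gammaHatA T f n h ω)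

/-- `P(a_t a_{t-h} = 1)`, computed at the representative date `t = h`. -/
noncomputable def pA (μ : Measure Ω) (T : Ω → Ω) (f : Ω → ℝ) (h : ℕ) : ℝ :=
  (μ {ω | rproc T f h ω ≠ 0 ∧ rproc T f 0 ω ≠ 0}).toReal

/-- `ρ_ε(h) = [E(r_t r_{t-h})/P(a_t a_{t-h} = 1)] ⋅ [P(a_t = 1)/E(r_t²)]`. -/
noncomputable def rhoEps (μ : Measure Ω) (T : Ω → Ω) (f : Ω → ℝ) (h : ℕ) : ℝ :=
  ((∫ ω, rproc T f h ω * rproc T f 0 ω ∂μ) / pA μ T f h)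
    * (pA μ T f 0 / ∫ ω, (f ω) ^ 2 ∂μ)

section Birkhoff

variable {μ : Measure Ω} {T : Ω → Ω} {g : Ω → ℝ} {r : ℝ}

/-- Recursive maximum of Birkhoff sums: `maxS T g N = max_{0 ≤ n ≤ N} S_n`. -/
noncomputable def maxS (T : Ω → Ω) (g : Ω → ℝ) : ℕ → Ω → ℝ
  | 0 => fun _ => 0
  | (N + 1) => fun ω => max 0 (g ω + maxS T g N (T ω))

lemma maxS_nonneg (N : ℕ) (ω : Ω) : 0 ≤ maxS T g N ω := by
  cases N with
  | zero => exact le_refl 0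
  | succ N => exact le_max_left _ _

lemma maxS_mono (N : ℕ) (ω : Ω) : maxS T g N ω ≤ maxS T g (N + 1) ω := by
  induction N generalizing ω with
  | zero => exact maxS_nonneg 1 ω
  | succ N ih =>
    show max 0 (g ω + maxS T g N (T ω)) ≤ max 0 (g ω + maxS T g (N + 1) (T ω))
    exact max_le_max le_rfl (by linarith [ih (T ω)])

lemma birkhoffSum_le_maxS : ∀ n N : ℕ, n ≤ N → ∀ ω : Ω, birkhoffSum T g n ω ≤ maxS T g N ω := by
  intro n
  induction n with
  | zero => intro N _ ω; simpa [birkhoffSum_zero] using maxS_nonneg (T := T) (g := g) N ω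
  | succ n ih =>
    intro N hN ω
    obtain ⟨N', rfl⟩ : ∃ N', N = N' + 1 := ⟨N - 1, by omega⟩
    rw [birkhoffSum_succ']
    have h1 : birkhoffSum T g n (T ω) ≤ maxS T g N' (T ω) := ih N' (by omega) (T ω)
    have h2 : g ω + maxS T g N' (T ω) ≤ max 0 (g ω + maxS T g N' (T ω)) := le_max_right _ _
    show g ω + birkhoffSum T g n (T ω) ≤ max 0 (g ω + maxS T g N' (T ω))
    linarith

lemma measurable_birkhoffSum (hT : Measurable T) (hg : Measurable g) (n : ℕ) :
    Measurable (fun ω => birkhoffSum T g n ω) := by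
  unfold birkhoffSum
  exact Finset.measurable_sum _ fun k _ => hg.comp (hT.iterate k)

lemma measurable_maxS (hT : Measurable T) (hg : Measurable g) (N : ℕ) :
    Measurable (maxS T g N) := by
  induction N with
  | zero => exact measurable_const
  | succ N ih => exact measurable_const.max (hg.add (ih.comp hT))

lemma integrable_comp_T (hTm : MeasurePreserving T μ μ) {φ : Ω → ℝ} (hφ : Integrable φ μ) :
    Integrable (fun ω => φ (T ω)) μ := by
  rw [← memLp_one_iff_integrable] at hφ ⊢
  exact hφ.comp_measurePreserving hTm

lemma integral_comp_T (hTm : MeasurePreserving T μ μ) {φ : Ω → ℝ}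
    (hφ : AEStronglyMeasurable φ μ) : ∫ ω, φ (T ω) ∂μ = ∫ ω, φ ω ∂μ := by
  have h1 : AEStronglyMeasurable φ (Measure.map T μ) := by rwa [hTm.map_eq]
  calc ∫ ω, φ (T ω) ∂μ = ∫ y, φ y ∂(Measure.map T μ) :=
        (integral_map hTm.measurable.aemeasurable h1).symm
    _ = ∫ ω, φ ω ∂μ := by rw [hTm.map_eq]

lemma integrable_maxS (hTm : MeasurePreserving T μ μ) (hg : Integrable g μ) (N : ℕ) :
    Integrable (maxS T g N) μ := by
  induction N with
  | zero => exact integrable_zero _ _ _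
  | succ N ih =>
    have h1 : Integrable (fun ω => maxS T g N (T ω)) μ := integrable_comp_T hTm ih
    have h2 := (integrable_zero Ω ℝ μ).sup (hg.add h1)
    exact h2

/-- The maximal ergodic theorem. -/
lemma maximal_ergodic (hTm : MeasurePreserving T μ μ) (hgm : Measurable g)
    (hg : Integrable g μ) (N : ℕ) :
    0 ≤ ∫ ω in {ω | 0 < maxS T g N ω}, g ω ∂μ := by
  cases N with
  | zero =>
    have hempty : {ω : Ω | 0 < maxS T g 0 ω} = ∅ := by ext ω; simp [maxS]
    rw [hempty]; simp
  | succ N =>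
    have hTmeas := hTm.measurable
    set M := maxS T g (N + 1) with hM
    have hMm : Measurable M := measurable_maxS hTmeas hgm (N + 1)
    have hMint : Integrable M μ := integrable_maxS hTm hg (N + 1)
    have hMTint : Integrable (fun ω => M (T ω)) μ := integrable_comp_T hTm hMint
    set E := {ω | 0 < M ω} with hE
    have hEm : MeasurableSet E := measurableSet_lt measurable_const hMm
    have key : ∀ ω ∈ E, M ω ≤ g ω + M (T ω) := by
      intro ω hω
      have h3 : 0 < M ω := hω
      have h1 : M ω = max 0 (g ω + maxS T g N (T ω)) := rfl
      have h2 : maxS T g N (T ω) ≤ M (T ω) := maxS_mono N (T ω)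
      rcases le_or_gt (g ω + maxS T g N (T ω)) 0 with hle | hlt
      · rw [h1, max_eq_left hle] at h3; exact absurd h3 (lt_irrefl 0)
      · rw [h1, max_eq_right hlt.le]; linarith
    have step1 : ∫ ω in E, M ω ∂μ ≤ ∫ ω in E, (g ω + M (T ω)) ∂μ :=
      setIntegral_mono_on hMint.integrableOn (hg.add hMTint).integrableOn hEm key
    have step2 : ∫ ω in E, (g ω + M (T ω)) ∂μ = ∫ ω in E, g ω ∂μ + ∫ ω in E, M (T ω) ∂μ :=
      integral_add hg.integrableOn hMTint.integrableOn
    have step3 : ∫ ω in E, M (T ω) ∂μ ≤ ∫ ω, M (T ω) ∂μ :=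
      setIntegral_le_integral hMTint (Eventually.of_forall fun ω => maxS_nonneg (N + 1) (T ω))
    have step4 : ∫ ω, M (T ω) ∂μ = ∫ ω, M ω ∂μ := integral_comp_T hTm hMm.aestronglyMeasurable
    have step5 : ∫ ω in E, M ω ∂μ = ∫ ω, M ω ∂μ := by
      have hcompl : ∫ ω in Eᶜ, M ω ∂μ = 0 := by
        apply setIntegral_eq_zero_of_forall_eq_zero
        intro ω hω
        have : ¬ 0 < M ω := hω
        exact le_antisymm (not_lt.1 this) (maxS_nonneg (N + 1) ω)
      have := integral_add_compl hEm hMint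
      linarith
    linarith

/-- The "bad" set where the Birkhoff averages frequently exceed some rational above `r`. -/
def badSet (T : Ω → Ω) (g : Ω → ℝ) (r : ℝ) : Set Ω :=
  {ω | ∃ q : ℚ, r < (q : ℝ) ∧
    ∃ᶠ n : ℕ in atTop, (q : ℝ) * ((n : ℝ) + 1) ≤ birkhoffSum T g (n + 1) ω}

lemma badSet_invariant : T ⁻¹' badSet T g r = badSet T g r := by
  ext ω
  simp only [mem_preimage, badSet, mem_setOf_eq]
  constructor
  · rintro ⟨q, hq, hfreq⟩
    obtain ⟨q', hq'1, hq'2⟩ := exists_rat_btwn hq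
    refine ⟨q', hq'1, frequently_atTop.2 fun a => ?_⟩
    have hqq' : (0 : ℝ) < (q : ℝ) - (q' : ℝ) := by
      have : (q' : ℝ) < q := by exact_mod_cast hq'2
      linarith
    obtain ⟨N₀, hN₀⟩ := exists_nat_ge (((q : ℝ) - g ω) / ((q : ℝ) - (q' : ℝ)))
    obtain ⟨n, hn, hfn⟩ := frequently_atTop.1 hfreq (max a N₀)
    refine ⟨n + 1, by have := le_trans (le_max_left a N₀) hn; omega, ?_⟩
    have hS : birkhoffSum T g (n + 2) ω = g ω + birkhoffSum T g (n + 1) (T ω) :=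
      birkhoffSum_succ' T g (n + 1) ω
    have h2 : (q : ℝ) - g ω ≤ ((q : ℝ) - (q' : ℝ)) * (N₀ : ℝ) := by
      rw [div_le_iff₀ hqq'] at hN₀; linarith [hN₀]
    have h3 : (N₀ : ℝ) ≤ (n : ℝ) + 2 := by
      have : (N₀ : ℝ) ≤ (n : ℝ) := by exact_mod_cast le_trans (le_max_right a N₀) hn
      linarith
    have hmul : ((q : ℝ) - (q' : ℝ)) * (N₀ : ℝ) ≤ ((q : ℝ) - (q' : ℝ)) * ((n : ℝ) + 2) :=
      mul_le_mul_of_nonneg_left h3 hqq'.le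
    have e1 : (q' : ℝ) * ((n : ℝ) + 2) = (q : ℝ) * ((n : ℝ) + 2) - ((q : ℝ) - (q' : ℝ)) * ((n : ℝ) + 2) := by ring
    have e2 : (q : ℝ) * ((n : ℝ) + 2) = (q : ℝ) * ((n : ℝ) + 1) + (q : ℝ) := by ring
    have goalcast : ((↑(n + 1) : ℝ) + 1) = (n : ℝ) + 2 := by push_cast; ring
    rw [goalcast]
    have : birkhoffSum T g ((n + 1) + 1) ω = g ω + birkhoffSum T g (n + 1) (T ω) := hS
    rw [this]
    linarith [hfn]
  · rintro ⟨q, hq, hfreq⟩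
    obtain ⟨q', hq'1, hq'2⟩ := exists_rat_btwn hq
    refine ⟨q', hq'1, frequently_atTop.2 fun a => ?_⟩
    have hqq' : (0 : ℝ) < (q : ℝ) - (q' : ℝ) := by
      have : (q' : ℝ) < q := by exact_mod_cast hq'2
      linarith
    obtain ⟨N₀, hN₀⟩ := exists_nat_ge ((g ω - (q : ℝ)) / ((q : ℝ) - (q' : ℝ)))
    obtain ⟨n, hn, hfn⟩ := frequently_atTop.1 hfreq (max (a + 1) (N₀ + 1))
    have hn1 : 1 ≤ n := le_trans (by omega) (le_trans (le_max_left _ _) hn)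
    refine ⟨n - 1, by have := le_trans (le_max_left (a + 1) (N₀ + 1)) hn; omega, ?_⟩
    have hm1 : n - 1 + 1 = n := by omega
    have hS : birkhoffSum T g (n + 1) ω = g ω + birkhoffSum T g n (T ω) :=
      birkhoffSum_succ' T g n ω
    have h2 : g ω - (q : ℝ) ≤ ((q : ℝ) - (q' : ℝ)) * (N₀ : ℝ) := by
      rw [div_le_iff₀ hqq'] at hN₀; linarith [hN₀]
    have h3 : (N₀ : ℝ) ≤ (n : ℝ) := by
      have : N₀ ≤ n := by
        have := le_trans (le_max_right (a + 1) (N₀ + 1)) hn; omega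
      exact_mod_cast this
    have hmul : ((q : ℝ) - (q' : ℝ)) * (N₀ : ℝ) ≤ ((q : ℝ) - (q' : ℝ)) * (n : ℝ) :=
      mul_le_mul_of_nonneg_left h3 hqq'.le
    have goalcast : ((↑(n - 1) : ℝ) + 1) = (n : ℝ) := by
      have : ((n - 1 : ℕ) : ℝ) = (n : ℝ) - 1 := by
        push_cast [Nat.cast_sub hn1]; ring
      rw [this]; ring
    rw [hm1, goalcast]
    have hcast2 : ((n : ℝ) + 1) = ((n : ℝ) + 1) := rfl
    have e1 : (q' : ℝ) * (n : ℝ) = (q : ℝ) * (n : ℝ) - ((q : ℝ) - (q' : ℝ)) * (n : ℝ) := by ring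
    have e2 : (q : ℝ) * ((n : ℝ) + 1) = (q : ℝ) * (n : ℝ) + (q : ℝ) := by ring
    have hfn' : (q : ℝ) * ((n : ℝ) + 1) ≤ birkhoffSum T g (n + 1) ω := hfn
    rw [hS] at hfn'
    linarith

lemma badSet_measurableSet (hT : Measurable T) (hg : Measurable g) :
    MeasurableSet (badSet T g r) := by
  have heq : badSet T g r = ⋃ (q : ℚ), ⋃ (_ : r < (q : ℝ)), ⋂ (N : ℕ), ⋃ (n : ℕ),
      ⋃ (_ : N ≤ n), {ω | (q : ℝ) * ((n : ℝ) + 1) ≤ birkhoffSum T g (n + 1) ω} := by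
    ext ω
    simp only [badSet, mem_setOf_eq, mem_iUnion, mem_iInter, frequently_atTop, ge_iff_le,
      exists_prop]
  rw [heq]
  refine MeasurableSet.iUnion fun q => MeasurableSet.iUnion fun _ =>
    MeasurableSet.iInter fun N => MeasurableSet.iUnion fun n => MeasurableSet.iUnion fun _ => ?_
  exact measurableSet_le measurable_const (measurable_birkhoffSum hT hg (n + 1))

lemma birkhoffSum_sub_const (T : Ω → Ω) (g : Ω → ℝ) (r : ℝ) (n : ℕ) (ω : Ω) :
    birkhoffSum T (fun x => g x - r) n ω = birkhoffSum T g n ω - n * r := by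
  unfold birkhoffSum
  rw [Finset.sum_sub_distrib, Finset.sum_const, Finset.card_range, nsmul_eq_mul]

lemma birkhoffSum_neg' (T : Ω → Ω) (g : Ω → ℝ) (n : ℕ) (ω : Ω) :
    birkhoffSum T (fun x => -g x) n ω = -birkhoffSum T g n ω := by
  unfold birkhoffSum
  rw [← Finset.sum_neg_distrib]

lemma badSet_null [IsProbabilityMeasure μ] (hT : Ergodic T μ) (hgm : Measurable g)
    (hg : Integrable g μ) (hr : ∫ ω, g ω ∂μ < r) : μ (badSet T g r) = 0 := by
  rcases hT.toPreErgodic.prob_eq_zero_or_one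
      (badSet_measurableSet hT.toMeasurePreserving.measurable hgm)
      (badSet_invariant (T := T) (g := g) (r := r)) with h0 | h1
  · exact h0
  · exfalso
    have hTmeas := hT.toMeasurePreserving.measurable
    set h : Ω → ℝ := fun ω => g ω - r with hdef
    have hm : Measurable h := hgm.sub measurable_const
    have hi : Integrable h μ := hg.sub (integrable_const r)
    set E : ℕ → Set Ω := fun N => {ω | 0 < maxS T h N ω} with hEdef
    have hEmeas : ∀ N, MeasurableSet (E N) :=
      fun N => measurableSet_lt measurable_const (measurable_maxS hTmeas hm N)
    have hEmono : Monotone E := monotone_nat_of_le_succ fun N ω hω =>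
      lt_of_lt_of_le hω (maxS_mono N ω)
    have hsub : badSet T g r ⊆ ⋃ N, E N := by
      rintro ω ⟨q, hq, hfreq⟩
      obtain ⟨n, hn⟩ := hfreq.exists
      refine mem_iUnion.2 ⟨n + 1, ?_⟩
      have hbs : birkhoffSum T h (n + 1) ω = birkhoffSum T g (n + 1) ω - ((n : ℝ) + 1) * r := by
        rw [hdef, birkhoffSum_sub_const]; push_cast; ring
      have hpos : (0 : ℝ) < (n : ℝ) + 1 := by positivity
      have hlt : r * ((n : ℝ) + 1) < (q : ℝ) * ((n : ℝ) + 1) :=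
        mul_lt_mul_of_pos_right hq hpos
      have h0 : 0 < birkhoffSum T h (n + 1) ω := by rw [hbs]; nlinarith [hn]
      exact lt_of_lt_of_le h0 (birkhoffSum_le_maxS (n + 1) (n + 1) le_rfl ω)
    have hunion : μ (⋃ N, E N) = 1 :=
      le_antisymm prob_le_one (h1 ▸ measure_mono hsub)
    have hlim := tendsto_setIntegral_of_monotone hEmeas hEmono hi.integrableOn
    have h0le : 0 ≤ ∫ ω in ⋃ N, E N, h ω ∂μ :=
      ge_of_tendsto hlim (Eventually.of_forall fun N =>
        maximal_ergodic hT.toMeasurePreserving hm hi N)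
    have hcompl0 : μ (⋃ N, E N)ᶜ = 0 := by
      rw [measure_compl (MeasurableSet.iUnion hEmeas) (measure_ne_top μ _), hunion]
      simp
    have heq : ∫ ω in ⋃ N, E N, h ω ∂μ = ∫ ω, h ω ∂μ := by
      have hz : ∫ ω in (⋃ N, E N)ᶜ, h ω ∂μ = 0 := by
        rw [Measure.restrict_eq_zero.2 hcompl0, integral_zero_measure]
      have := integral_add_compl (MeasurableSet.iUnion hEmeas) hi
      linarith
    have hint : ∫ ω, h ω ∂μ = (∫ ω, g ω ∂μ) - r := by
      rw [hdef]
      rw [integral_sub hg (integrable_const r), integral_const]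
      simp [measure_univ]
    rw [heq, hint] at h0le
    linarith

/-- **Birkhoff's pointwise ergodic theorem** for an ergodic transformation
of a probability space. -/
theorem birkhoff_ae [IsProbabilityMeasure μ] (hT : Ergodic T μ) (hgm : Measurable g)
    (hg : Integrable g μ) :
    ∀ᵐ ω ∂μ, Tendsto (fun n : ℕ => (n : ℝ)⁻¹ * birkhoffSum T g n ω) atTop
      (nhds (∫ ω, g ω ∂μ)) := by
  set c := ∫ ω, g ω ∂μ with hc
  have hup : ∀ k : ℕ, μ (badSet T g (c + 1 / ((k : ℝ) + 1))) = 0 := by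
    intro k
    apply badSet_null hT hgm hg
    have : (0 : ℝ) < 1 / ((k : ℝ) + 1) := by positivity
    linarith
  have hdn : ∀ k : ℕ, μ (badSet T (fun x => -g x) (-c + 1 / ((k : ℝ) + 1))) = 0 := by
    intro k
    apply badSet_null hT hgm.neg hg.neg
    have h1 : ∫ ω, -g ω ∂μ = -c := by rw [integral_neg]
    have : (0 : ℝ) < 1 / ((k : ℝ) + 1) := by positivity
    simp only [Pi.neg_apply]; rw [h1]; linarith
  have hae : ∀ᵐ ω ∂μ, (∀ k : ℕ, ω ∉ badSet T g (c + 1 / ((k : ℝ) + 1))) ∧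
      (∀ k : ℕ, ω ∉ badSet T (fun x => -g x) (-c + 1 / ((k : ℝ) + 1))) := by
    filter_upwards [ae_all_iff.2 fun k => (measure_eq_zero_iff_ae_notMem).1 (hup k),
      ae_all_iff.2 fun k => (measure_eq_zero_iff_ae_notMem).1 (hdn k)] with ω h1 h2
    exact ⟨h1, h2⟩
  filter_upwards [hae] with ω hω
  obtain ⟨hu, hd⟩ := hω
  have key : Tendsto (fun n : ℕ => ((↑(n + 1) : ℝ))⁻¹ * birkhoffSum T g (n + 1) ω) atTop
      (nhds c) := by
    refine tendsto_order.2 ⟨fun b hb => ?_, fun b hb => ?_⟩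
    · obtain ⟨k, hk⟩ := exists_nat_one_div_lt (show (0 : ℝ) < c - b by linarith)
      have h1 : -c + 1 / ((k : ℝ) + 1) < -b := by linarith
      obtain ⟨q, hq1, hq2⟩ := exists_rat_btwn h1
      have hnofreq : ¬ ∃ᶠ n : ℕ in atTop,
          (q : ℝ) * ((n : ℝ) + 1) ≤ birkhoffSum T (fun x => -g x) (n + 1) ω :=
        fun hf => hd k ⟨q, hq1, hf⟩
      rw [not_frequently] at hnofreq
      filter_upwards [hnofreq] with n hn
      rw [birkhoffSum_neg'] at hn
      push_neg at hn
      have hpos : (0 : ℝ) < (n : ℝ) + 1 := by positivity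
      have hcast : ((↑(n + 1) : ℝ)) = (n : ℝ) + 1 := by push_cast; ring
      rw [hcast, inv_mul_eq_div, lt_div_iff₀ hpos]
      have hbq : b < -(q : ℝ) := by linarith
      nlinarith [mul_lt_mul_of_pos_right hbq hpos]
    · obtain ⟨k, hk⟩ := exists_nat_one_div_lt (show (0 : ℝ) < b - c by linarith)
      have h1 : c + 1 / ((k : ℝ) + 1) < b := by linarith
      obtain ⟨q, hq1, hq2⟩ := exists_rat_btwn h1
      have hnofreq : ¬ ∃ᶠ n : ℕ in atTop,
          (q : ℝ) * ((n : ℝ) + 1) ≤ birkhoffSum T g (n + 1) ω :=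
        fun hf => hu k ⟨q, hq1, hf⟩
      rw [not_frequently] at hnofreq
      filter_upwards [hnofreq] with n hn
      push_neg at hn
      have hpos : (0 : ℝ) < (n : ℝ) + 1 := by positivity
      have hcast : ((↑(n + 1) : ℝ)) = (n : ℝ) + 1 := by push_cast; ring
      rw [hcast, inv_mul_eq_div, div_lt_iff₀ hpos]
      nlinarith [mul_lt_mul_of_pos_right hq2 hpos]
  exact (tendsto_add_atTop_iff_nat 1).1 key

/-- Almost sure convergence of the lagged empirical averages appearing in `gammaHat`. -/
lemma ae_tendsto_avg [IsProbabilityMeasure μ] (hT : Ergodic T μ) (hgm : Measurable g)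
    (hg : Integrable g μ) (h : ℕ) :
    ∀ᵐ ω ∂μ, Tendsto (fun n : ℕ => (n : ℝ)⁻¹ * ∑ t ∈ Finset.Icc (h + 1) n, g (T^[t - h] ω))
      atTop (nhds (∫ ω, g ω ∂μ)) := by
  set c := ∫ ω, g ω ∂μ with hc
  filter_upwards [birkhoff_ae hT hgm hg] with ω hω
  have hid : ∀ n : ℕ, ∑ t ∈ Finset.Icc (h + 1) n, g (T^[t - h] ω)
      = birkhoffSum T g (n - h + 1) ω - g ω := by
    intro n
    rw [← Finset.Ico_add_one_right_eq_Icc, Finset.sum_Ico_eq_sum_range]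
    have hcount : n + 1 - (h + 1) = n - h := by omega
    rw [hcount]
    have hterm : ∀ i ∈ Finset.range (n - h), g (T^[h + 1 + i - h] ω) = g (T^[i + 1] ω) :=
      fun i _ => by congr 2; omega
    rw [Finset.sum_congr rfl hterm]
    have hsplit := Finset.sum_range_succ' (fun i => g (T^[i] ω)) (n - h)
    have hbs : birkhoffSum T g (n - h + 1) ω = ∑ i ∈ Finset.range (n - h + 1), g (T^[i] ω) := rfl
    rw [hbs, hsplit]
    simp
  have hφ : Tendsto (fun n : ℕ => n - h + 1) atTop atTop :=
    tendsto_atTop.2 fun b => eventually_atTop.2 ⟨b + h, fun n hn => by omega⟩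
  have h1 : Tendsto (fun n : ℕ => ((↑(n - h + 1) : ℝ))⁻¹ * birkhoffSum T g (n - h + 1) ω)
      atTop (nhds c) := hω.comp hφ
  have h2 : Tendsto (fun n : ℕ => ((↑(n - h + 1) : ℝ)) / (n : ℝ)) atTop (nhds 1) := by
    have hbase : Tendsto (fun n : ℕ => 1 + ((1 : ℝ) - h) / (n : ℝ)) atTop (nhds 1) := by
      have := (tendsto_const_div_atTop_nhds_zero_nat ((1 : ℝ) - h)).const_add 1
      simpa using this
    apply hbase.congr'
    filter_upwards [eventually_ge_atTop (h + 1)] with n hn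
    have hn0 : (0 : ℝ) < (n : ℝ) := by
      have : 0 < n := by omega
      exact_mod_cast this
    have hcast : ((n - h + 1 : ℕ) : ℝ) = (n : ℝ) - (h : ℝ) + 1 := by
      push_cast [Nat.cast_sub (show h ≤ n by omega)]; ring
    rw [hcast]
    field_simp
    ring
  have h3 := h2.mul h1
  rw [one_mul] at h3
  have h4 : Tendsto (fun n : ℕ => (n : ℝ)⁻¹ * birkhoffSum T g (n - h + 1) ω) atTop (nhds c) := by
    apply Tendsto.congr' ?_ h3
    filter_upwards [eventually_ge_atTop 1] with n hn
    have hnn : ((n - h + 1 : ℕ) : ℝ) ≠ 0 := Nat.cast_ne_zero.2 (by omega)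
    have hn0 : ((n : ℝ)) ≠ 0 := Nat.cast_ne_zero.2 (by omega)
    field_simp
  have h5 : Tendsto (fun n : ℕ => (n : ℝ)⁻¹ * g ω) atTop (nhds 0) := by
    have := tendsto_const_div_atTop_nhds_zero_nat (g ω)
    simpa [div_eq_mul_inv, mul_comm] using this
  have h6 := h4.sub h5
  rw [sub_zero] at h6
  apply Tendsto.congr' ?_ h6
  apply Eventually.of_forall
  intro n
  simp only [hid n]
  ring

end Birkhoff

/-- In the stationary ergodic setting with
`P(a_t a_{t-h} = 1) > 0` for `h = 1,…,m`, the corrected empirical autocorrelation vector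
`Γ̂_pr(m)` converges almost surely to `Γ_ε(m) = (ρ_ε(1),…,ρ_ε(m))'`. -/
theorem stmt2 {Ω : Type*} [MeasurableSpace Ω] (μ : Measure Ω) [IsProbabilityMeasure μ]
    (T : Ω → Ω) (hT : Ergodic T μ) (f : Ω → ℝ) (hf : Measurable f)
    (hf2 : MemLp f 2 μ)
    (hmean : ∫ ω, f ω ∂μ = 0)
    (hvar_pos : 0 < ∫ ω, (f ω) ^ 2 ∂μ)
    (hnz : 0 < μ {ω | f ω ≠ 0})
    (m : ℕ)
    (hpA : ∀ h, 1 ≤ h → h ≤ m → 0 < μ {ω | rproc T f h ω ≠ 0 ∧ rproc T f 0 ω ≠ 0}) :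
    ∀ᵐ ω ∂μ, Tendsto (fun n : ℕ => fun i : Fin m => rhoHatPr T f n (i + 1) ω)
      atTop (nhds (fun i : Fin m => rhoEps μ T f (i + 1))) := by
  classical
  have hTm : Measurable T := hT.toMeasurePreserving.measurable
  set G : ℕ → Ω → ℝ := fun h x => f (T^[h] x) * f x with hGdef
  set B : ℕ → Ω → ℝ := fun h x =>
    (if f (T^[h] x) ≠ 0 then (1 : ℝ) else 0) * (if f x ≠ 0 then (1 : ℝ) else 0) with hBdef
  have hGm : ∀ h, Measurable (G h) := fun h => (hf.comp (hTm.iterate h)).mul hf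
  have hGint : ∀ h, Integrable (G h) μ := by
    intro h
    have h2 : MemLp (fun x => f (T^[h] x)) 2 μ :=
      hf2.comp_measurePreserving (hT.toMeasurePreserving.iterate h)
    have h3 : MemLp ((fun x => f (T^[h] x)) • f) 1 μ :=
      hf2.smul h2
    have h4 : ((fun x => f (T^[h] x)) • f) = G h := by
      funext x; simp [hGdef, Pi.smul_apply, smul_eq_mul]
    rw [h4] at h3
    exact memLp_one_iff_integrable.1 h3
  have hSmeas : ∀ h : ℕ, MeasurableSet {ω | rproc T f h ω ≠ 0 ∧ rproc T f 0 ω ≠ 0} := by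
    intro h
    have h1 : Measurable (rproc T f h) := hf.comp (hTm.iterate h)
    have h0 : Measurable (rproc T f 0) := hf.comp (hTm.iterate 0)
    exact ((h1 (measurableSet_singleton 0).compl).inter
      (h0 (measurableSet_singleton 0).compl))
  have hBind : ∀ h : ℕ,
      B h = Set.indicator {ω | rproc T f h ω ≠ 0 ∧ rproc T f 0 ω ≠ 0} (fun _ => (1 : ℝ)) := by
    intro h; funext x
    simp only [hBdef, Set.indicator_apply, mem_setOf_eq, rproc, Function.iterate_zero_apply]
    by_cases h1 : f (T^[h] x) = 0 <;> by_cases h2 : f x = 0 <;> simp [h1, h2]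
  have hBm : ∀ h, Measurable (B h) := fun h => by
    rw [hBind h]; exact measurable_const.indicator (hSmeas h)
  have hBint : ∀ h, Integrable (B h) μ := fun h => by
    rw [hBind h]; exact (integrable_const 1).indicator (hSmeas h)
  have hBval : ∀ h, ∫ ω, B h ω ∂μ = pA μ T f h := by
    intro h
    rw [hBind h, pA]
    exact integral_indicator_one (hSmeas h)
  have hg0 : ∀ (n h : ℕ) (ω : Ω), gammaHat0 T f n h ω
      = (n : ℝ)⁻¹ * ∑ t ∈ Finset.Icc (h + 1) n, (G h) (T^[t - h] ω) := by
    intro n h ω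
    unfold gammaHat0
    congr 1
    apply Finset.sum_congr rfl
    intro t ht
    have hht : h + 1 ≤ t := (Finset.mem_Icc.1 ht).1
    simp only [rproc, hGdef]
    rw [← Function.iterate_add_apply, show h + (t - h) = t from by omega]
  have hga : ∀ (n h : ℕ) (ω : Ω), gammaHatA T f n h ω
      = (n : ℝ)⁻¹ * ∑ t ∈ Finset.Icc (h + 1) n, (B h) (T^[t - h] ω) := by
    intro n h ω
    unfold gammaHatA
    congr 1
    apply Finset.sum_congr rfl
    intro t ht
    have hht : h + 1 ≤ t := (Finset.mem_Icc.1 ht).1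
    simp only [aproc, rproc, hBdef]
    rw [← Function.iterate_add_apply, show h + (t - h) = t from by omega]
    congr
  have h0ae : ∀ᵐ ω ∂μ, ∀ h : ℕ,
      Tendsto (fun n => gammaHat0 T f n h ω) atTop (nhds (∫ ω, G h ω ∂μ)) := by
    rw [ae_all_iff]
    intro h
    filter_upwards [ae_tendsto_avg hT (hGm h) (hGint h) h] with ω hω
    exact hω.congr fun n => (hg0 n h ω).symm
  have hAae : ∀ᵐ ω ∂μ, ∀ h : ℕ,
      Tendsto (fun n => gammaHatA T f n h ω) atTop (nhds (∫ ω, B h ω ∂μ)) := by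
    rw [ae_all_iff]
    intro h
    filter_upwards [ae_tendsto_avg hT (hBm h) (hBint h) h] with ω hω
    exact hω.congr fun n => (hga n h ω).symm
  have hc0 : ∫ ω, G 0 ω ∂μ = ∫ ω, (f ω) ^ 2 ∂μ := by
    have : G 0 = fun x => (f x) ^ 2 := by
      funext x; simp [hGdef, pow_two]
    rw [this]
  have hGval : ∀ h, ∫ ω, G h ω ∂μ = ∫ ω, rproc T f h ω * rproc T f 0 ω ∂μ := by
    intro h
    have : (fun ω => rproc T f h ω * rproc T f 0 ω) = G h := by
      funext ω; simp [rproc, hGdef]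
    rw [this]
  have hpA0pos : 0 < pA μ T f 0 := by
    have : {ω | rproc T f 0 ω ≠ 0 ∧ rproc T f 0 ω ≠ 0} = {ω | f ω ≠ 0} := by
      ext ω; simp [rproc]
    rw [pA, this]
    exact ENNReal.toReal_pos hnz.ne' (measure_ne_top μ _)
  filter_upwards [h0ae, hAae] with ω hω0 hωA
  rw [tendsto_pi_nhds]
  intro i
  have hpAhpos : 0 < pA μ T f ((i : ℕ) + 1) :=
    ENNReal.toReal_pos (hpA _ (by omega) (by omega)).ne' (measure_ne_top μ _)
  have t1 := (hω0 ((i : ℕ) + 1)).div (hω0 0) (by rw [hc0]; exact hvar_pos.ne')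
  have t2 := (hωA 0).div (hωA ((i : ℕ) + 1)) (by rw [hBval]; exact hpAhpos.ne')
  have t3 := t1.mul t2
  have hval : (∫ ω, G ((i : ℕ) + 1) ω ∂μ) / (∫ ω, G 0 ω ∂μ)
      * ((∫ ω, B 0 ω ∂μ) / (∫ ω, B ((i : ℕ) + 1) ω ∂μ)) = rhoEps μ T f ((i : ℕ) + 1) := by
    rw [rhoEps, hGval, hc0, hBval 0, hBval]
    have hpA0' : (μ {ω | rproc T f 0 ω ≠ 0 ∧ rproc T f 0 ω ≠ 0}).toReal = pA μ T f 0 := rfl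
    ring
  rw [← hval]
  exact t3

end StationaryPr
end

section
/- Let (a_t)_{t≥1} be {0,1}-valued random variables on a probability space whose strong mixing coefficients α(h) := sup_t sup_{A ∈ σ(a_u : u ≤ t), B ∈ σ(a_u : u ≥ t+h)} |P(A∩B) − P(A)P(B)| satisfy Σ_{h=0}^∞ α(h)^δ < ∞ for some δ ∈ (0,1). Let K : ℝ → ℝ satisfy 0 ≤ K(z) ≤ R for all z and some finite R. Then there exists a constant C > 0 such that for all integers n ≥ 1, all t with 1 ≤ t ≤ n, and all b > 0, E[ ( (1/(nb)) Σ_{j=1}^n K_{tj} · (a_j − E(a_j)) )² ] ≤ C/(n b²), where K_{tj} = K((t−j)/(nb)) for j ≠ t and K_{tt} = 0. -/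
open MeasureTheory ProbabilityTheory Filter Set

namespace MixingKernelBound

variable {Ω : Type*} [MeasurableSpace Ω]

/-- The σ-field `σ(a_u : u ≤ t)` of the past of the sequence. -/
noncomputable def pastField (a : ℕ → Ω → ℝ) (t : ℕ) : MeasurableSpace Ω :=
  ⨆ u ∈ {u : ℕ | u ≤ t}, MeasurableSpace.comap (a u) inferInstance

/-- The σ-field `σ(a_u : u ≥ t)` of the future of the sequence. -/
noncomputable def futureField (a : ℕ → Ω → ℝ) (t : ℕ) : MeasurableSpace Ω :=
  ⨆ u ∈ {u : ℕ | t ≤ u}, MeasurableSpace.comap (a u) inferInstance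

/-- The strong (α-)mixing coefficients of the sequence `(a_t)`:
`α(h) = sup_t sup { |P(A∩B) - P(A)P(B)| : A ∈ σ(a_u : u ≤ t), B ∈ σ(a_u : u ≥ t+h) }`. -/
noncomputable def alphaMix (μ : Measure Ω) (a : ℕ → Ω → ℝ) (h : ℕ) : ℝ :=
  ⨆ t : ℕ, sSup {x : ℝ | ∃ A B : Set Ω,
    MeasurableSet[pastField a t] A ∧ MeasurableSet[futureField a (t + h)] B ∧
    x = |(μ (A ∩ B)).toReal - (μ A).toReal * (μ B).toReal|}

section Aux

set_option linter.unusedSectionVars false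

variable (μ : Measure Ω) [IsProbabilityMeasure μ] (a : ℕ → Ω → ℝ)

lemma toReal_prob_le_one (s : Set Ω) : (μ s).toReal ≤ 1 := by
  have h := measure_mono (μ := μ) (subset_univ s)
  have := ENNReal.toReal_mono (by simp) h
  simpa using this

lemma set_upperBound (t h : ℕ) :
    ∀ x ∈ {x : ℝ | ∃ A B : Set Ω,
      MeasurableSet[pastField a t] A ∧ MeasurableSet[futureField a (t + h)] B ∧
      x = |(μ (A ∩ B)).toReal - (μ A).toReal * (μ B).toReal|}, x ≤ 1 := by
  rintro x ⟨A, B, -, -, rfl⟩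
  have h1 : (μ (A ∩ B)).toReal ≤ 1 := toReal_prob_le_one μ _
  have h2 : (μ A).toReal ≤ 1 := toReal_prob_le_one μ _
  have h3 : (μ B).toReal ≤ 1 := toReal_prob_le_one μ _
  have h4 : 0 ≤ (μ (A ∩ B)).toReal := ENNReal.toReal_nonneg
  have h5 : 0 ≤ (μ A).toReal := ENNReal.toReal_nonneg
  have h6 : 0 ≤ (μ B).toReal := ENNReal.toReal_nonneg
  rw [abs_le]
  constructor <;> nlinarith

lemma alpha_ge (t h : ℕ) {A B : Set Ω}
    (hA : MeasurableSet[pastField a t] A) (hB : MeasurableSet[futureField a (t + h)] B) :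
    |(μ (A ∩ B)).toReal - (μ A).toReal * (μ B).toReal| ≤ alphaMix μ a h := by
  have hx : |(μ (A ∩ B)).toReal - (μ A).toReal * (μ B).toReal| ∈
      {x : ℝ | ∃ A B : Set Ω,
        MeasurableSet[pastField a t] A ∧ MeasurableSet[futureField a (t + h)] B ∧
        x = |(μ (A ∩ B)).toReal - (μ A).toReal * (μ B).toReal|} := ⟨A, B, hA, hB, rfl⟩
  have hb : BddAbove {x : ℝ | ∃ A B : Set Ω,
      MeasurableSet[pastField a t] A ∧ MeasurableSet[futureField a (t + h)] B ∧
      x = |(μ (A ∩ B)).toReal - (μ A).toReal * (μ B).toReal|} :=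
    ⟨1, fun x hx => set_upperBound μ a t h x hx⟩
  refine (le_csSup hb hx).trans ?_
  refine le_ciSup (f := fun t : ℕ => sSup {x : ℝ | ∃ A B : Set Ω,
      MeasurableSet[pastField a t] A ∧ MeasurableSet[futureField a (t + h)] B ∧
      x = |(μ (A ∩ B)).toReal - (μ A).toReal * (μ B).toReal|}) ?_ t
  refine ⟨1, ?_⟩
  rintro x ⟨t', rfl⟩
  exact Real.sSup_le (set_upperBound μ a t' h) zero_le_one

lemma alpha_nonneg (h : ℕ) : 0 ≤ alphaMix μ a h := by
  have h0 : (0 : ℝ) =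
      |(μ ((∅ : Set Ω) ∩ ∅)).toReal - (μ (∅ : Set Ω)).toReal * (μ (∅ : Set Ω)).toReal| := by
    simp
  calc (0 : ℝ) = _ := h0
    _ ≤ alphaMix μ a h :=
        alpha_ge μ a 0 h (@MeasurableSet.empty Ω (pastField a 0))
          (@MeasurableSet.empty Ω (futureField a (0 + h)))

lemma alpha_le_one (h : ℕ) : alphaMix μ a h ≤ 1 :=
  Real.iSup_le (fun t => Real.sSup_le (set_upperBound μ a t h) zero_le_one) zero_le_one

lemma meas_past {t i : ℕ} (hi : i ≤ t) : MeasurableSet[pastField a t] (a i ⁻¹' {1}) := by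
  have h1 : MeasurableSpace.comap (a i) inferInstance ≤ pastField a t :=
    le_iSup₂ (f := fun (u : ℕ) (_ : u ∈ {u : ℕ | u ≤ t}) =>
      MeasurableSpace.comap (a u) inferInstance) i hi
  exact h1 _ (MeasurableSpace.measurableSet_comap.2 ⟨{1}, measurableSet_singleton 1, rfl⟩)

lemma meas_future {t j : ℕ} (hj : t ≤ j) : MeasurableSet[futureField a t] (a j ⁻¹' {1}) := by
  have h1 : MeasurableSpace.comap (a j) inferInstance ≤ futureField a t :=
    le_iSup₂ (f := fun (u : ℕ) (_ : u ∈ {u : ℕ | t ≤ u}) =>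
      MeasurableSpace.comap (a u) inferInstance) j hj
  exact h1 _ (MeasurableSpace.measurableSet_comap.2 ⟨{1}, measurableSet_singleton 1, rfl⟩)

variable (ha_meas : ∀ t, Measurable (a t)) (ha01 : ∀ t ω, a t ω = 0 ∨ a t ω = 1)

include ha_meas ha01

lemma int_a (k : ℕ) : Integrable (a k) μ := by
  refine (integrable_const (1 : ℝ)).mono' (ha_meas k).aestronglyMeasurable ?_
  filter_upwards with ω
  rcases ha01 k ω with h | h <;> simp [h]

lemma int_prod (i j : ℕ) : Integrable (fun ω => a i ω * a j ω) μ := by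
  refine (integrable_const (1 : ℝ)).mono' ((ha_meas i).mul (ha_meas j)).aestronglyMeasurable ?_
  filter_upwards with ω
  rcases ha01 i ω with h | h <;> rcases ha01 j ω with h' | h' <;> simp [h, h']

lemma mean_mem (k : ℕ) : 0 ≤ ∫ ω, a k ω ∂μ ∧ ∫ ω, a k ω ∂μ ≤ 1 := by
  constructor
  · refine integral_nonneg fun ω => ?_
    rcases ha01 k ω with h | h <;> simp [h]
  · calc ∫ ω, a k ω ∂μ ≤ ∫ _ω, (1 : ℝ) ∂μ := by
          refine integral_mono (int_a μ a ha_meas ha01 k) (integrable_const 1) fun ω => ?_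
          rcases ha01 k ω with h | h <;> simp [h]
    _ = 1 := by simp

lemma int_eq_measure (k : ℕ) : ∫ ω, a k ω ∂μ = (μ (a k ⁻¹' {1})).toReal := by
  have hmeas : MeasurableSet (a k ⁻¹' {1}) := ha_meas k (measurableSet_singleton 1)
  have hind : ∀ ω, a k ω = (a k ⁻¹' {1}).indicator (fun _ => (1 : ℝ)) ω := by
    intro ω
    rcases ha01 k ω with h | h <;> simp [Set.indicator, Set.mem_preimage, h]
  calc ∫ ω, a k ω ∂μ = ∫ ω, (a k ⁻¹' {1}).indicator (fun _ => (1 : ℝ)) ω ∂μ :=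
        integral_congr_ae (Eventually.of_forall hind)
    _ = (μ (a k ⁻¹' {1})).toReal := by rw [integral_indicator_const _ hmeas]; simp; rfl

lemma int_prod_eq_measure (i j : ℕ) :
    ∫ ω, a i ω * a j ω ∂μ = (μ (a i ⁻¹' {1} ∩ a j ⁻¹' {1})).toReal := by
  have hmeas : MeasurableSet (a i ⁻¹' {1} ∩ a j ⁻¹' {1}) :=
    (ha_meas i (measurableSet_singleton 1)).inter (ha_meas j (measurableSet_singleton 1))
  have hind : ∀ ω, a i ω * a j ω =
      (a i ⁻¹' {1} ∩ a j ⁻¹' {1}).indicator (fun _ => (1 : ℝ)) ω := by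
    intro ω
    rcases ha01 i ω with h | h <;> rcases ha01 j ω with h' | h' <;>
      simp [Set.indicator, Set.mem_preimage, h, h']
  calc ∫ ω, a i ω * a j ω ∂μ
      = ∫ ω, (a i ⁻¹' {1} ∩ a j ⁻¹' {1}).indicator (fun _ => (1 : ℝ)) ω ∂μ :=
        integral_congr_ae (Eventually.of_forall hind)
    _ = _ := by rw [integral_indicator_const _ hmeas]; simp; rfl

lemma cov_abs_le_of_le (i j : ℕ) (hij : i ≤ j) :
    |∫ ω, (a i ω - ∫ ω', a i ω' ∂μ) * (a j ω - ∫ ω', a j ω' ∂μ) ∂μ| ≤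
      alphaMix μ a (j - i) := by
  set mi := ∫ ω', a i ω' ∂μ with hmi
  set mj := ∫ ω', a j ω' ∂μ with hmj
  have I1 := int_prod μ a ha_meas ha01 i j
  have I2 : Integrable (fun ω => mi * a j ω) μ := (int_a μ a ha_meas ha01 j).const_mul mi
  have I3 : Integrable (fun ω => mj * a i ω) μ := (int_a μ a ha_meas ha01 i).const_mul mj
  have I12 : Integrable (fun ω => a i ω * a j ω - mi * a j ω) μ := I1.sub I2
  have I123 : Integrable (fun ω => a i ω * a j ω - mi * a j ω - mj * a i ω) μ := I12.sub I3
  have hcov : ∫ ω, (a i ω - mi) * (a j ω - mj) ∂μ =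
      (μ (a i ⁻¹' {1} ∩ a j ⁻¹' {1})).toReal -
        (μ (a i ⁻¹' {1})).toReal * (μ (a j ⁻¹' {1})).toReal := by
    have h1 : ∀ ω, (a i ω - mi) * (a j ω - mj) =
        a i ω * a j ω - mi * a j ω - mj * a i ω + mi * mj := fun ω => by ring
    simp_rw [h1]
    rw [integral_add I123 (integrable_const _),
      integral_sub I12 I3, integral_sub I1 I2,
      integral_const_mul, integral_const_mul, integral_const]
    have emi : mi = (μ (a i ⁻¹' {1})).toReal := by
      rw [hmi]; exact int_eq_measure μ a ha_meas ha01 i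
    have emj : mj = (μ (a j ⁻¹' {1})).toReal := by
      rw [hmj]; exact int_eq_measure μ a ha_meas ha01 j
    rw [int_prod_eq_measure μ a ha_meas ha01 i j, emi, emj,
      int_eq_measure μ a ha_meas ha01 i, int_eq_measure μ a ha_meas ha01 j]
    simp only [Measure.real, measure_univ, ENNReal.toReal_one, one_smul]
    ring
  rw [hcov]
  have hA : MeasurableSet[pastField a i] (a i ⁻¹' {1}) := meas_past a le_rfl
  have hB : MeasurableSet[futureField a (i + (j - i))] (a j ⁻¹' {1}) := by
    rw [Nat.add_sub_cancel' hij]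
    exact meas_future a le_rfl
  exact alpha_ge μ a i (j - i) hA hB

lemma cov_abs_le (i j : ℕ) :
    |∫ ω, (a i ω - ∫ ω', a i ω' ∂μ) * (a j ω - ∫ ω', a j ω' ∂μ) ∂μ| ≤
      alphaMix μ a (Nat.dist i j) := by
  rcases le_total i j with hij | hij
  · rw [Nat.dist_eq_sub_of_le hij]
    exact cov_abs_le_of_le μ a ha_meas ha01 i j hij
  · rw [Nat.dist_eq_sub_of_le_right hij]
    have := cov_abs_le_of_le μ a ha_meas ha01 j i hij
    simpa [mul_comm] using this

end Aux

/-- For a `{0,1}`-valued sequence `(a_t)` whose strong mixing coefficients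
satisfy `Σ_h α(h)^δ < ∞` for some `δ ∈ (0,1)`, and a kernel `K` with `0 ≤ K ≤ R`, the
weighted centered sums satisfy
`E[((nb)⁻¹ Σ_{j=1}^n K_{tj}(a_j - E a_j))²] ≤ C/(n b²)` uniformly in `1 ≤ t ≤ n`, `b > 0`. -/
theorem stmt7 {Ω : Type*} [MeasurableSpace Ω] (μ : Measure Ω) [IsProbabilityMeasure μ]
    (a : ℕ → Ω → ℝ) (ha_meas : ∀ t, Measurable (a t))
    (ha01 : ∀ t ω, a t ω = 0 ∨ a t ω = 1)
    (δ : ℝ) (hδ0 : 0 < δ) (hδ1 : δ < 1)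
    (hmix : Summable (fun h : ℕ => alphaMix μ a h ^ δ))
    (K : ℝ → ℝ) (R : ℝ) (hK_nonneg : ∀ z, 0 ≤ K z) (hK_le : ∀ z, K z ≤ R) :
    ∃ C > (0 : ℝ), ∀ n : ℕ, 1 ≤ n → ∀ t : ℕ, 1 ≤ t → t ≤ n → ∀ b : ℝ, 0 < b →
      ∫ ω, ((1 / ((n : ℝ) * b)) * ∑ j ∈ Finset.Icc 1 n,
          (if j = t then 0 else K (((t : ℝ) - (j : ℝ)) / ((n : ℝ) * b)))
            * (a j ω - ∫ ω', a j ω' ∂μ)) ^ 2 ∂μ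
        ≤ C / ((n : ℝ) * b ^ 2) := by
  classical
  have hle : ∀ h : ℕ, alphaMix μ a h ≤ alphaMix μ a h ^ δ := by
    intro h
    rcases eq_or_lt_of_le (alpha_nonneg μ a h) with h0 | h0
    · rw [← h0, Real.zero_rpow hδ0.ne']
    · calc alphaMix μ a h = alphaMix μ a h ^ (1 : ℝ) := (Real.rpow_one _).symm
        _ ≤ alphaMix μ a h ^ δ :=
          Real.rpow_le_rpow_of_exponent_ge h0 (alpha_le_one μ a h) hδ1.le
  have hsum : Summable (fun h : ℕ => alphaMix μ a h) :=
    Summable.of_nonneg_of_le (fun h => alpha_nonneg μ a h) hle hmix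
  set S : ℝ := ∑' h, alphaMix μ a h with hS
  have hS0 : 0 ≤ S := tsum_nonneg fun h => alpha_nonneg μ a h
  have hR0 : 0 ≤ R := le_trans (hK_nonneg 0) (hK_le 0)
  have hrow : ∀ n : ℕ, ∀ i : ℕ, ∑ j ∈ Finset.Icc 1 n, alphaMix μ a (Nat.dist i j) ≤ 2 * S := by
    intro n i
    rw [← Finset.sum_filter_add_sum_filter_not (Finset.Icc 1 n) (fun j => j ≤ i)]
    have hinj1 : ∀ x ∈ (Finset.Icc 1 n).filter (fun j => j ≤ i),
        ∀ y ∈ (Finset.Icc 1 n).filter (fun j => j ≤ i),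
        Nat.dist i x = Nat.dist i y → x = y := by
      intro x hx y hy hxy
      simp only [Finset.mem_filter] at hx hy
      rw [Nat.dist_eq_sub_of_le_right hx.2, Nat.dist_eq_sub_of_le_right hy.2] at hxy
      omega
    have hinj2 : ∀ x ∈ (Finset.Icc 1 n).filter (fun j => ¬ j ≤ i),
        ∀ y ∈ (Finset.Icc 1 n).filter (fun j => ¬ j ≤ i),
        Nat.dist i x = Nat.dist i y → x = y := by
      intro x hx y hy hxy
      simp only [Finset.mem_filter] at hx hy
      rw [Nat.dist_eq_sub_of_le (le_of_not_ge hx.2), Nat.dist_eq_sub_of_le (le_of_not_ge hy.2)]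
        at hxy
      omega
    have h1 : ∑ j ∈ (Finset.Icc 1 n).filter (fun j => j ≤ i), alphaMix μ a (Nat.dist i j) ≤ S := by
      have he := Finset.sum_image (f := alphaMix μ a)
        (s := (Finset.Icc 1 n).filter (fun j => j ≤ i)) (g := fun j => Nat.dist i j) hinj1
      calc ∑ j ∈ (Finset.Icc 1 n).filter (fun j => j ≤ i), alphaMix μ a (Nat.dist i j)
          = ∑ h ∈ ((Finset.Icc 1 n).filter (fun j => j ≤ i)).image (fun j => Nat.dist i j),
              alphaMix μ a h := he.symm
        _ ≤ S := Summable.sum_le_tsum _ (fun h _ => alpha_nonneg μ a h) hsum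
    have h2 : ∑ j ∈ (Finset.Icc 1 n).filter (fun j => ¬ j ≤ i),
        alphaMix μ a (Nat.dist i j) ≤ S := by
      have he := Finset.sum_image (f := alphaMix μ a)
        (s := (Finset.Icc 1 n).filter (fun j => ¬ j ≤ i)) (g := fun j => Nat.dist i j) hinj2
      calc ∑ j ∈ (Finset.Icc 1 n).filter (fun j => ¬ j ≤ i), alphaMix μ a (Nat.dist i j)
          = ∑ h ∈ ((Finset.Icc 1 n).filter (fun j => ¬ j ≤ i)).image (fun j => Nat.dist i j),
              alphaMix μ a h := he.symm
        _ ≤ S := Summable.sum_le_tsum _ (fun h _ => alpha_nonneg μ a h) hsum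
    linarith
  refine ⟨2 * R ^ 2 * S + 1, by nlinarith [mul_nonneg (sq_nonneg R) hS0], ?_⟩
  intro n hn t ht htn b hb
  have hn0 : (0 : ℝ) < n := by exact_mod_cast hn
  have hb2 : (0 : ℝ) < (n : ℝ) * b ^ 2 := mul_pos hn0 (pow_pos hb 2)
  set w : ℕ → ℝ := fun j => if j = t then 0 else K (((t : ℝ) - (j : ℝ)) / ((n : ℝ) * b)) with hw
  have hw0 : ∀ j, 0 ≤ w j := by
    intro j; simp only [hw]; split
    · exact le_rfl
    · exact hK_nonneg _
  have hwR : ∀ j, w j ≤ R := by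
    intro j; simp only [hw]; split
    · exact hR0
    · exact hK_le _
  set X : ℕ → Ω → ℝ := fun j ω => a j ω - ∫ ω', a j ω' ∂μ with hX
  have hXbd : ∀ j ω, |X j ω| ≤ 1 := by
    intro j ω
    have hm := mean_mem μ a ha_meas ha01 j
    rcases ha01 j ω with h | h <;> rw [abs_le] <;> constructor <;>
      simp only [hX, h] <;> linarith [hm.1, hm.2]
  have hXXint : ∀ i j, Integrable (fun ω => X i ω * X j ω) μ := by
    intro i j
    refine (integrable_const (1 : ℝ)).mono'
      (((ha_meas i).sub measurable_const).mul
        ((ha_meas j).sub measurable_const)).aestronglyMeasurable ?_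
    filter_upwards with ω
    simp only [norm_one, Real.norm_eq_abs, abs_mul]
    calc |X i ω| * |X j ω| ≤ 1 * 1 :=
          mul_le_mul (hXbd i ω) (hXbd j ω) (abs_nonneg _) zero_le_one
      _ = 1 := one_mul 1
  have key : ∫ ω, ((1 / ((n : ℝ) * b)) * ∑ j ∈ Finset.Icc 1 n, w j * X j ω) ^ 2 ∂μ =
      (1 / ((n : ℝ) * b)) ^ 2 * ∑ i ∈ Finset.Icc 1 n, ∑ j ∈ Finset.Icc 1 n,
        (w i * w j) * ∫ ω, X i ω * X j ω ∂μ := by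
    have hpt : ∀ ω, ((1 / ((n : ℝ) * b)) * ∑ j ∈ Finset.Icc 1 n, w j * X j ω) ^ 2 =
        (1 / ((n : ℝ) * b)) ^ 2 * ∑ i ∈ Finset.Icc 1 n, ∑ j ∈ Finset.Icc 1 n,
          (w i * w j) * (X i ω * X j ω) := by
      intro ω
      rw [mul_pow, sq (∑ j ∈ Finset.Icc 1 n, w j * X j ω), Finset.sum_mul_sum]
      congr 1
      refine Finset.sum_congr rfl fun i _ => Finset.sum_congr rfl fun j _ => by ring
    simp_rw [hpt]
    rw [integral_const_mul]
    congr 1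
    rw [integral_finset_sum _ fun i _ => integrable_finset_sum _
      fun j _ => (hXXint i j).const_mul _]
    refine Finset.sum_congr rfl fun i _ => ?_
    rw [integral_finset_sum _ fun j _ => (hXXint i j).const_mul _]
    exact Finset.sum_congr rfl fun j _ => integral_const_mul _ _
  have hterm : ∀ i j, (w i * w j) * ∫ ω, X i ω * X j ω ∂μ ≤
      R ^ 2 * alphaMix μ a (Nat.dist i j) := by
    intro i j
    have hcov := cov_abs_le μ a ha_meas ha01 i j
    have h1 : ∫ ω, X i ω * X j ω ∂μ ≤ alphaMix μ a (Nat.dist i j) :=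
      le_trans (le_abs_self _) hcov
    have h2 : 0 ≤ w i * w j := mul_nonneg (hw0 i) (hw0 j)
    calc (w i * w j) * ∫ ω, X i ω * X j ω ∂μ ≤ (w i * w j) * alphaMix μ a (Nat.dist i j) :=
          mul_le_mul_of_nonneg_left h1 h2
      _ ≤ R ^ 2 * alphaMix μ a (Nat.dist i j) := by
          refine mul_le_mul_of_nonneg_right ?_ (alpha_nonneg μ a _)
          calc w i * w j ≤ R * R := mul_le_mul (hwR i) (hwR j) (hw0 j) hR0
            _ = R ^ 2 := (sq R).symm
  have hsum2 : ∑ i ∈ Finset.Icc 1 n, ∑ j ∈ Finset.Icc 1 n,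
      (w i * w j) * ∫ ω, X i ω * X j ω ∂μ ≤ (n : ℝ) * (2 * R ^ 2 * S) := by
    calc ∑ i ∈ Finset.Icc 1 n, ∑ j ∈ Finset.Icc 1 n, (w i * w j) * ∫ ω, X i ω * X j ω ∂μ
        ≤ ∑ i ∈ Finset.Icc 1 n, ∑ j ∈ Finset.Icc 1 n, R ^ 2 * alphaMix μ a (Nat.dist i j) :=
          Finset.sum_le_sum fun i _ => Finset.sum_le_sum fun j _ => hterm i j
      _ = ∑ i ∈ Finset.Icc 1 n, R ^ 2 * ∑ j ∈ Finset.Icc 1 n, alphaMix μ a (Nat.dist i j) := by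
          simp_rw [Finset.mul_sum]
      _ ≤ ∑ i ∈ Finset.Icc 1 n, R ^ 2 * (2 * S) :=
          Finset.sum_le_sum fun i _ =>
            mul_le_mul_of_nonneg_left (hrow n i) (sq_nonneg R)
      _ = (n : ℝ) * (2 * R ^ 2 * S) := by
          rw [Finset.sum_const, Nat.card_Icc]
          simp only [nsmul_eq_mul, Nat.add_sub_cancel]
          ring
  calc ∫ ω, ((1 / ((n : ℝ) * b)) * ∑ j ∈ Finset.Icc 1 n, w j * X j ω) ^ 2 ∂μ
      = (1 / ((n : ℝ) * b)) ^ 2 * ∑ i ∈ Finset.Icc 1 n, ∑ j ∈ Finset.Icc 1 n,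
          (w i * w j) * ∫ ω, X i ω * X j ω ∂μ := key
    _ ≤ (1 / ((n : ℝ) * b)) ^ 2 * ((n : ℝ) * (2 * R ^ 2 * S)) :=
        mul_le_mul_of_nonneg_left hsum2 (sq_nonneg _)
    _ = (2 * R ^ 2 * S) / ((n : ℝ) * b ^ 2) := by
        field_simp
    _ ≤ (2 * R ^ 2 * S + 1) / ((n : ℝ) * b ^ 2) := by
        apply div_le_div_of_nonneg_right ?_ hb2.le |>.trans_eq rfl
        linarith

end MixingKernelBound
end
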